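/- Define w(x) = (28/19)x plus a bonus: 25124/77805 if x > 1/2, 6528/77805 if 1/3 < x ≤ 1/2, 5520/77805 if 1/4 < x ≤ 1/3, 1008/77805 if 1/6 < x ≤ 1/4, and 0 if 0 ≤ x ≤ 1/6. Then for any finite multiset B of reals in [0,1] with total sum at most 1, the total weight ∑_{x∈B} w(x) is at most 146312/77805. -/

import Mathlib

noncomputable def w2 (x : ℝ) : ℝ :=
  28/19 * x +
    if x > 1/2 then 25124/77805
    else if x > 1/3 then 6528/77805
    else if x > 1/4 then 5520/77805
    else if x > 1/6 then 1008/77805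
    else 0

/-!
Round every item down to the nearest of `1/2, 1/3, 1/4, 1/6, 0` and count in twelfths: an item
`x > 1/6` then occupies `t x ∈ {6, 4, 3, 2}` twelfths with `t x < 12 x`, and `w2 x` is
`28/19 x` plus a bonus depending only on `t x`. A bin holding some item `x > 1/6` therefore
occupies at most `11` twelfths, and an unbounded-knapsack table shows that the bonuses of items
fitting into `11` twelfths add up to at most `31652/77805 = 146312/77805 - 28/19`.
-/

noncomputable def roundedTwelfths (x : ℝ) : ℕ :=
  if x > 1/2 then 6
  else if x > 1/3 then 4
  else if x > 1/4 then 3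
  else if x > 1/6 then 2
  else 0

def bonusOfTwelfths : ℕ → ℕ
  | 6 => 25124
  | 4 => 6528
  | 3 => 5520
  | 2 => 1008
  | _ => 0

lemma w2_eq (x : ℝ) : w2 x = 28/19 * x + (bonusOfTwelfths (roundedTwelfths x) : ℝ) / 77805 := by
  unfold w2 roundedTwelfths
  split_ifs <;> norm_num [bonusOfTwelfths]

lemma sum_map_w2 (B : Multiset ℝ) :
    (B.map w2).sum
      = 28/19 * B.sum + (((B.map roundedTwelfths).map bonusOfTwelfths).sum : ℝ) / 77805 := by
  rw [Multiset.map_congr rfl fun x _ => w2_eq x, Multiset.sum_map_add, Multiset.sum_map_mul_left,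
    Multiset.map_id', Multiset.sum_map_div, Nat.cast_multiset_sum, Multiset.map_map,
    Multiset.map_map]
  rfl

lemma roundedTwelfths_le {x : ℝ} (hx : 0 ≤ x) : (roundedTwelfths x : ℝ) ≤ 12 * x := by
  unfold roundedTwelfths
  split_ifs <;> norm_num <;> linarith

lemma roundedTwelfths_lt {x : ℝ} (hx : 1/6 < x) : (roundedTwelfths x : ℝ) < 12 * x := by
  unfold roundedTwelfths
  split_ifs <;> norm_num <;> linarith

lemma roundedTwelfths_eq_zero {x : ℝ} (hx : x ≤ 1/6) : roundedTwelfths x = 0 := by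
  unfold roundedTwelfths
  split_ifs <;> first | rfl | linarith

lemma sum_map_roundedTwelfths_le_eleven (B : Multiset ℝ) (hB : ∀ x ∈ B, 0 ≤ x)
    (hsum : B.sum ≤ 1) : (B.map roundedTwelfths).sum ≤ 11 := by
  by_cases hbig : ∃ x ∈ B, 1/6 < x
  · obtain ⟨y, hyB, hy⟩ := hbig
    have hlt : ((B.map roundedTwelfths).sum : ℝ) < 12 := by
      calc ((B.map roundedTwelfths).sum : ℝ)
          = (B.map fun x => (roundedTwelfths x : ℝ)).sum := by
            rw [Nat.cast_multiset_sum, Multiset.map_map]; rfl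
        _ < (B.map fun x => 12 * x).sum :=
            Multiset.sum_lt_sum (fun x hx => roundedTwelfths_le (hB x hx))
              ⟨y, hyB, roundedTwelfths_lt hy⟩
        _ = 12 * B.sum := by rw [Multiset.sum_map_mul_left, Multiset.map_id']
        _ ≤ 12 := by linarith
    have : (B.map roundedTwelfths).sum < 12 := by exact_mod_cast hlt
    omega
  · push Not at hbig
    rw [Multiset.sum_eq_zero fun n hn => ?_]
    · omega
    obtain ⟨x, hx, rfl⟩ := Multiset.mem_map.mp hn
    exact roundedTwelfths_eq_zero (hbig x hx)

/-- The optimal total bonus of items of sizes `2, 3, 4, 6` fitting into `n ≤ 11` twelfths. -/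
def knapsackBonus (n : ℕ) : ℕ :=
  [0, 0, 1008, 5520, 6528, 6528, 25124, 25124, 26132, 30644, 31652, 31652].getD n 0

lemma knapsackBonus_add_bonusOfTwelfths_le :
    ∀ n < 12, ∀ k ≤ n, knapsackBonus (n - k) + bonusOfTwelfths k ≤ knapsackBonus n := by
  decide

lemma sum_map_bonusOfTwelfths_le_knapsackBonus (S : Multiset ℕ) :
    ∀ n < 12, S.sum ≤ n → (S.map bonusOfTwelfths).sum ≤ knapsackBonus n := by
  induction S using Multiset.induction_on with
  | empty => simp
  | cons k T ih =>
    intro n hn hsum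
    rw [Multiset.sum_cons] at hsum
    rw [Multiset.map_cons, Multiset.sum_cons, add_comm]
    calc (T.map bonusOfTwelfths).sum + bonusOfTwelfths k
        ≤ knapsackBonus (n - k) + bonusOfTwelfths k := by
          gcongr; exact ih (n - k) (by omega) (by omega)
      _ ≤ knapsackBonus n := knapsackBonus_add_bonusOfTwelfths_le n hn k (by omega)

theorem stmt2 (B : Multiset ℝ) (hB : ∀ x ∈ B, 0 ≤ x ∧ x ≤ 1)
    (hsum : B.sum ≤ 1) : (B.map w2).sum ≤ 146312/77805 := by
  set S := B.map roundedTwelfths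
  have hbonus : (S.map bonusOfTwelfths).sum ≤ 31652 :=
    sum_map_bonusOfTwelfths_le_knapsackBonus S 11 (by norm_num)
      (sum_map_roundedTwelfths_le_eleven B (fun x hx => (hB x hx).1) hsum)
  have hbonusR : ((S.map bonusOfTwelfths).sum : ℝ) ≤ 31652 := by exact_mod_cast hbonus
  calc (B.map w2).sum
      = 28/19 * B.sum + ((S.map bonusOfTwelfths).sum : ℝ) / 77805 := sum_map_w2 B
    _ ≤ 28/19 * 1 + 31652 / 77805 := by gcongr
    _ = 146312/77805 := by norm_num
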